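/- arXiv:1312.3552 — 2 statements merged into one kernel-verified Lean document; each statement's English description precedes it below -/
import Mathlib

section
/- Let G₁ be a bipartite graph with Gallai–Edmonds partition of its vertices into even vertices E, odd vertices O, and unreachable vertices U (defined via alternating paths from unmatched vertices with respect to some maximum matching). Then in every maximum matching of G₁, every vertex of U is matched to another vertex of U and every vertex of O is matched to some vertex of E; no maximum matching contains an edge joining a vertex of O to a vertex of O ∪ U; and the size of a maximum matching equals |O| + |U|/2. -/
/-- `M` is a matching of the graph `G`: a set of edges of `G` in which every vertex
lies in at most one edge. -/
def IsGraphMatching {V : Type*} (G : SimpleGraph V) (M : Set (Sym2 V)) : Prop :=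
  M ⊆ G.edgeSet ∧ ∀ e ∈ M, ∀ e' ∈ M, ∀ v : V, v ∈ e → v ∈ e' → e = e'

/-- A maximum (cardinality) matching of `G`. -/
def IsMaximumMatching {V : Type*} (G : SimpleGraph V) (M : Set (Sym2 V)) : Prop :=
  IsGraphMatching G M ∧ ∀ N : Set (Sym2 V), IsGraphMatching G N → N.ncard ≤ M.ncard

/-- A vertex is unmatched by `M` if it lies in no edge of `M`. -/
def UnmatchedVtx {V : Type*} (M : Set (Sym2 V)) (v : V) : Prop := ∀ e ∈ M, v ∉ e

/-- A walk is alternating with respect to the matching `M` (as a walk starting at an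
unmatched vertex) if its edges alternately avoid and belong to `M`, starting with an
edge not in `M`. -/
def IsAlternatingWalk {V : Type*} {G : SimpleGraph V} {u v : V} (M : Set (Sym2 V))
    (p : G.Walk u v) : Prop :=
  ∀ (i : ℕ) (h : i < p.edges.length), (p.edges.get ⟨i, h⟩ ∈ M ↔ i % 2 = 1)

/-- `v` is an even vertex: there is an even-length alternating path from some
`M`-unmatched vertex to `v`. -/
def EvenVtx {V : Type*} (G : SimpleGraph V) (M : Set (Sym2 V)) (v : V) : Prop :=
  ∃ u, UnmatchedVtx M u ∧ ∃ p : G.Walk u v, p.IsPath ∧ IsAlternatingWalk M p ∧ Even p.length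

/-- `v` is an odd vertex: there is an odd-length alternating path from some
`M`-unmatched vertex to `v`. -/
def OddVtx {V : Type*} (G : SimpleGraph V) (M : Set (Sym2 V)) (v : V) : Prop :=
  ∃ u, UnmatchedVtx M u ∧ ∃ p : G.Walk u v, p.IsPath ∧ IsAlternatingWalk M p ∧ Odd p.length

/-- `v` is unreachable: no alternating path from an `M`-unmatched vertex reaches `v`. -/
def UnreachableVtx {V : Type*} (G : SimpleGraph V) (M : Set (Sym2 V)) (v : V) : Prop :=
  ¬ ∃ u, UnmatchedVtx M u ∧ ∃ p : G.Walk u v, p.IsPath ∧ IsAlternatingWalk M p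

/-- `G` is bipartite. -/
def IsBipartite {V : Type*} (G : SimpleGraph V) : Prop :=
  ∃ s : Set V, ∀ ⦃u v : V⦄, G.Adj u v → (u ∈ s ↔ v ∉ s)

/-!
In a bipartite graph a walk from an unmatched vertex alternates exactly when every dart lies in
the matching iff its tail is on the far side from the start. So alternation survives `bypass`
and gluing, and with Berge's augmenting-path argument one gets, for a maximum matching `M₀`: no
vertex is both even and odd, odd vertices are matched to even ones, and all neighbours of an
even vertex are odd. Consequently the weights `1` on `O`, `1/2` on `U` and `0` on `E` form a fractional
vertex cover of total `|O| + |U|/2` which `M₀` attains. Every maximum matching `M` therefore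
attains it too, and complementary slackness forces each edge of `M` to be tight (odd–even or
unreachable–unreachable) and every vertex of `O ∪ U` to be covered by `M`.
-/

section Matching

open SimpleGraph

variable {V : Type*} {G : SimpleGraph V} {M : Set (Sym2 V)}

lemma IsGraphMatching.mono {N : Set (Sym2 V)} (hM : IsGraphMatching G M) (hNM : N ⊆ M) :
    IsGraphMatching G N :=
  ⟨hNM.trans hM.1, fun e he e' he' => hM.2 e (hNM he) e' (hNM he')⟩

lemma IsGraphMatching.eq_of_mem (hM : IsGraphMatching G M) {a b c : V} (hab : s(a, b) ∈ M)
    (hac : s(a, c) ∈ M) : b = c :=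
  Sym2.congr_right.mp (hM.2 _ hab _ hac a (Sym2.mem_mk_left a b) (Sym2.mem_mk_left a c))

lemma IsGraphMatching.insert_edge (hM : IsGraphMatching G M) {a b : V} (hab : G.Adj a b)
    (ha : UnmatchedVtx M a) (hb : UnmatchedVtx M b) : IsGraphMatching G (insert s(a, b) M) := by
  have hfree : ∀ e ∈ M, ∀ v ∈ s(a, b), v ∉ e := by
    intro e he v hv
    rcases Sym2.mem_iff.mp hv with rfl | rfl
    exacts [ha e he, hb e he]
  refine ⟨Set.insert_subset hab hM.1, ?_⟩
  rintro e (rfl | he) e' (rfl | he') v hv hv'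
  · rfl
  · exact absurd hv' (hfree e' he' v hv)
  · exact absurd hv (hfree e he v hv')
  · exact hM.2 e he e' he' v hv hv'

lemma exists_mem_of_not_unmatchedVtx {v : V} (h : ¬ UnmatchedVtx M v) : ∃ w, s(v, w) ∈ M := by
  simp only [UnmatchedVtx, not_forall, not_not] at h
  obtain ⟨e, he, hv⟩ := h
  obtain ⟨w, rfl⟩ := Sym2.mem_iff_exists.mp hv
  exact ⟨w, he⟩

lemma isAlternatingWalk_cons_cons_iff {a x y b : V} (h₁ : G.Adj a x) (h₂ : G.Adj x y)
    (p : G.Walk y b) :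
    IsAlternatingWalk M (.cons h₁ (.cons h₂ p)) ↔
      s(a, x) ∉ M ∧ s(x, y) ∈ M ∧ IsAlternatingWalk M p := by
  simp only [IsAlternatingWalk, Walk.edges_cons, List.length_cons, List.get_eq_getElem]
  constructor
  · intro h
    refine ⟨by simpa using h 0 (by omega), by simpa using h 1 (by omega), fun i hi => ?_⟩
    simpa [show (i + 2) % 2 = i % 2 by omega] using h (i + 2) (by omega)
  · rintro ⟨h0, h1, h⟩ (_ | _ | i) hi
    · simpa using h0
    · simpa using h1
    · simpa [show (i + 1 + 1) % 2 = i % 2 by omega] using h i (by omega)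

lemma IsAlternatingWalk.congr {M' : Set (Sym2 V)} {u v : V} {p : G.Walk u v}
    (h : IsAlternatingWalk M p) (hMM' : ∀ e ∈ p.edges, e ∈ M ↔ e ∈ M') :
    IsAlternatingWalk M' p :=
  fun i hi => (hMM' _ (List.get_mem _ _)).symm.trans (h i hi)

lemma IsGraphMatching.insert_sdiff [Finite V] (hM : IsGraphMatching G M) {a x y : V}
    (hax : G.Adj a x) (ha : UnmatchedVtx M a) (hxy : s(x, y) ∈ M) :
    IsGraphMatching G (insert s(a, x) (M \ {s(x, y)})) ∧
      (insert s(a, x) (M \ {s(x, y)})).ncard = M.ncard := by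
  refine ⟨(hM.mono Set.sdiff_subset).insert_edge hax (fun e he => ha e he.1)
    fun e he hx => he.2 (hM.2 e he.1 _ hxy x hx (Sym2.mem_mk_left x y)), ?_⟩
  rw [Set.ncard_insert_of_notMem fun h => ha _ h.1 (Sym2.mem_mk_left a x),
    Set.ncard_sdiff_singleton_add_one hxy]

lemma unmatchedVtx_insert_sdiff {a x y z : V} (hza : z ≠ a) (hzx : z ≠ x)
    (hz : ∀ e ∈ M, z ∈ e → e = s(x, y)) :
    UnmatchedVtx (insert s(a, x) (M \ {s(x, y)})) z := by
  rintro e (rfl | ⟨he, hne⟩) hze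
  · rcases Sym2.mem_iff.mp hze with rfl | rfl <;> contradiction
  · exact hne (hz e he hze)

theorem IsGraphMatching.exists_ncard_lt_of_augmenting [Finite V] {M : Set (Sym2 V)}
    (hM : IsGraphMatching G M) {a b : V} (p : G.Walk a b) (hp : p.IsPath)
    (halt : IsAlternatingWalk M p) (hodd : Odd p.length) (ha : UnmatchedVtx M a)
    (hb : UnmatchedVtx M b) : ∃ N, IsGraphMatching G N ∧ M.ncard < N.ncard := by
  match p, hp, halt, hodd with
  | .nil, _, _, hodd => simp at hodd
  | .cons h .nil, _, _, _ =>
    refine ⟨_, hM.insert_edge h ha hb, ?_⟩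
    rw [Set.ncard_insert_of_notMem fun hab => ha _ hab (Sym2.mem_mk_left a b)]
    omega
  | .cons (v := x) h₁ (.cons (v := y) h₂ p), hp, halt, hodd =>
    -- swap `s(x, y)` for `s(a, x)`: same size, and the rest of the path is augmenting
    obtain ⟨-, hxy, hpalt⟩ := (isAlternatingWalk_cons_cons_iff h₁ h₂ p).mp halt
    have hedges := hp.isTrail.edges_nodup
    simp only [Walk.edges_cons, List.nodup_cons, List.mem_cons, not_or] at hedges
    simp only [Walk.cons_isPath_iff, Walk.support_cons, List.mem_cons, not_or] at hp
    obtain ⟨⟨hp, hxp⟩, -, hap⟩ := hp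
    set M' := insert s(a, x) (M \ {s(x, y)})
    obtain ⟨hM', hcard⟩ := hM.insert_sdiff h₁ ha hxy
    have hy : UnmatchedVtx M' y :=
      unmatchedVtx_insert_sdiff (fun h => hap (h ▸ p.start_mem_support))
        (fun h => hxp (h ▸ p.start_mem_support))
        fun e he hy => hM.2 e he _ hxy y hy (Sym2.mem_mk_right x y)
    have hb' : UnmatchedVtx M' b :=
      unmatchedVtx_insert_sdiff (fun h => hap (h ▸ p.end_mem_support))
        (fun h => hxp (h ▸ p.end_mem_support)) fun e he hbe => (hb e he hbe).elim
    have hpalt' : IsAlternatingWalk M' p := hpalt.congr fun e he => by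
      have hne₁ : e ≠ s(a, x) := fun h => hedges.1.2 (h ▸ he)
      have hne₂ : e ≠ s(x, y) := fun h => hedges.2.1 (h ▸ he)
      simp [M', hne₁, hne₂]
    rw [← hcard]
    exact hM'.exists_ncard_lt_of_augmenting p hp hpalt' (by simpa [Nat.odd_add] using hodd)
      hy hb'

end Matching

section Bipartite

open SimpleGraph

variable {V : Type*} {G : SimpleGraph V} {M : Set (Sym2 V)} {s : Set V}

def IsBipartition (G : SimpleGraph V) (s : Set V) : Prop :=
  ∀ ⦃a b : V⦄, G.Adj a b → (a ∈ s ↔ b ∉ s)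

lemma IsBipartition.even_length_iff (hs : IsBipartition G s) {u v : V} (p : G.Walk u v) :
    Even p.length ↔ (u ∈ s ↔ v ∈ s) := by
  induction p with
  | nil => simp
  | cons h q ih =>
    rw [Walk.length_cons, Nat.even_add_one, ih]
    have := hs h
    tauto

lemma IsBipartition.odd_length_iff (hs : IsBipartition G s) {u v : V} (p : G.Walk u v) :
    Odd p.length ↔ (u ∈ s ↔ v ∉ s) := by
  rw [← Nat.not_even_iff_odd, hs.even_length_iff]
  tauto

lemma IsBipartition.isAlternatingWalk_iff (hs : IsBipartition G s) {u v : V} (p : G.Walk u v) :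
    IsAlternatingWalk M p ↔ ∀ d ∈ p.darts, (d.edge ∈ M ↔ (d.fst ∈ s ↔ u ∉ s)) := by
  have hside : ∀ i ≤ p.length, (p.getVert i ∈ s ↔ u ∉ s) ↔ i % 2 = 1 := fun i hi => by
    have := hs.odd_length_iff (p.take i)
    rw [Walk.take_length, min_eq_left hi] at this
    rw [← Nat.odd_iff, this]
    tauto
  rw [List.forall_mem_iff_getElem]
  simp only [IsAlternatingWalk, List.get_eq_getElem, Walk.length_edges, Walk.length_darts,
    Walk.getElem_edges_eq_edge_getElem_darts, Walk.darts_getElem_eq_getVert]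
  exact forall₂_congr fun i hi => by rw [hside i hi.le]

lemma IsAlternatingWalk.bypass [DecidableEq V] (hs : IsBipartition G s) {u v : V}
    {p : G.Walk u v} (h : IsAlternatingWalk M p) : IsAlternatingWalk M p.bypass := by
  rw [hs.isAlternatingWalk_iff] at h ⊢
  exact fun d hd => h d (p.darts_bypass_subset_darts hd)

lemma IsBipartition.isAlternatingWalk_concat_iff (hs : IsBipartition G s) {u v w : V}
    (p : G.Walk u v) (h : G.Adj v w) :
    IsAlternatingWalk M (p.concat h) ↔
      IsAlternatingWalk M p ∧ (s(v, w) ∈ M ↔ (v ∈ s ↔ u ∉ s)) := by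
  simp [hs.isAlternatingWalk_iff, or_imp, forall_and]

lemma IsAlternatingWalk.append_reverse (hs : IsBipartition G s) {u v w : V}
    {p : G.Walk u v} {q : G.Walk w v} (hp : IsAlternatingWalk M p)
    (hq : IsAlternatingWalk M q) (huw : u ∈ s ↔ w ∉ s) :
    IsAlternatingWalk M (p.append q.reverse) := by
  rw [hs.isAlternatingWalk_iff] at hp hq ⊢
  simp only [Walk.darts_append, Walk.darts_reverse, List.mem_append, List.mem_reverse,
    List.mem_map]
  rintro _ (hd | ⟨d, hd, rfl⟩)
  · exact hp _ hd
  · have := hs d.adj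
    rw [Dart.edge_symm, Dart.symm_toProd, hq d hd]
    simp only [Prod.fst_swap]
    tauto

lemma evenVtx_of_unmatchedVtx {v : V} (hv : UnmatchedVtx M v) : EvenVtx G M v :=
  ⟨v, hv, .nil, .nil, fun _ h => by simp at h, by simp⟩

lemma EvenVtx.not_unreachableVtx {v : V} (hv : EvenVtx G M v) : ¬ UnreachableVtx G M v :=
  fun hun => let ⟨u, hu, p, hp, halt, _⟩ := hv; hun ⟨u, hu, p, hp, halt⟩

lemma OddVtx.not_unreachableVtx {v : V} (hv : OddVtx G M v) : ¬ UnreachableVtx G M v :=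
  fun hun => let ⟨u, hu, p, hp, halt, _⟩ := hv; hun ⟨u, hu, p, hp, halt⟩

lemma evenVtx_or_oddVtx_or_unreachableVtx (G : SimpleGraph V) (M : Set (Sym2 V)) (v : V) :
    EvenVtx G M v ∨ OddVtx G M v ∨ UnreachableVtx G M v := by
  by_cases hv : UnreachableVtx G M v
  · exact .inr (.inr hv)
  · obtain ⟨u, hu, p, hp, halt⟩ := not_not.mp hv
    rcases Nat.even_or_odd p.length with heven | hodd
    exacts [.inl ⟨u, hu, p, hp, halt, heven⟩, .inr (.inl ⟨u, hu, p, hp, halt, hodd⟩)]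

lemma IsBipartition.evenVtx_iff (hs : IsBipartition G s) {v : V} :
    EvenVtx G M v ↔ ∃ u, UnmatchedVtx M u ∧
      ∃ p : G.Walk u v, IsAlternatingWalk M p ∧ (u ∈ s ↔ v ∈ s) := by
  classical
  constructor
  · rintro ⟨u, hu, p, -, halt, heven⟩
    exact ⟨u, hu, p, halt, (hs.even_length_iff p).mp heven⟩
  · rintro ⟨u, hu, p, halt, hside⟩
    exact ⟨u, hu, p.bypass, p.bypass_isPath, halt.bypass hs, (hs.even_length_iff _).mpr hside⟩

lemma IsBipartition.oddVtx_iff (hs : IsBipartition G s) {v : V} :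
    OddVtx G M v ↔ ∃ u, UnmatchedVtx M u ∧
      ∃ p : G.Walk u v, IsAlternatingWalk M p ∧ (u ∈ s ↔ v ∉ s) := by
  classical
  constructor
  · rintro ⟨u, hu, p, -, halt, hodd⟩
    exact ⟨u, hu, p, halt, (hs.odd_length_iff p).mp hodd⟩
  · rintro ⟨u, hu, p, halt, hside⟩
    exact ⟨u, hu, p.bypass, p.bypass_isPath, halt.bypass hs, (hs.odd_length_iff _).mpr hside⟩

lemma IsGraphMatching.oddVtx_of_adj (hM : IsGraphMatching G M) (hs : IsBipartition G s)
    {v w : V} (hv : EvenVtx G M v) (hvw : G.Adj v w) : OddVtx G M w := by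
  rw [hs.evenVtx_iff] at hv
  rw [hs.oddVtx_iff]
  obtain ⟨u, hu, p, hp, huv⟩ := hv
  have hsides := hs hvw
  by_cases hm : s(v, w) ∈ M
  · -- the walk already arrives at `v` through its matching edge, which is `s(w, v)`
    have hnil : ¬ p.Nil := fun hnil => hu _ hm (hnil.eq ▸ Sym2.mem_mk_left v w)
    obtain ⟨x, q, hxv, rfl⟩ : ∃ x, ∃ (q : G.Walk u x) (hxv : G.Adj x v), p = q.concat hxv :=
      ⟨_, _, _, (p.concat_dropLast (p.adj_penultimate hnil)).symm⟩
    rw [hs.isAlternatingWalk_concat_iff] at hp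
    have hx := hs hxv
    have hxv_mem : s(v, x) ∈ M := Sym2.eq_swap ▸ hp.2.mpr (by tauto)
    obtain rfl := hM.eq_of_mem hxv_mem hm
    exact ⟨u, hu, q, hp.1, by tauto⟩
  · exact ⟨u, hu, p.concat hvw, (hs.isAlternatingWalk_concat_iff p hvw).mpr ⟨hp, by tauto⟩,
      by tauto⟩

lemma IsMaximumMatching.not_isAlternatingWalk [Finite V] (hM : IsMaximumMatching G M)
    (hs : IsBipartition G s) {u u' : V} (hu : UnmatchedVtx M u) (hu' : UnmatchedVtx M u')
    (p : G.Walk u u') (hside : u ∈ s ↔ u' ∉ s) : ¬ IsAlternatingWalk M p := by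
  classical
  intro halt
  obtain ⟨N, hN, hlt⟩ := hM.1.exists_ncard_lt_of_augmenting p.bypass p.bypass_isPath
    (halt.bypass hs) ((hs.odd_length_iff _).mpr hside) hu hu'
  exact (hM.2 N hN).not_gt hlt

lemma IsMaximumMatching.not_evenVtx_of_oddVtx [Finite V] (hM : IsMaximumMatching G M)
    (hs : IsBipartition G s) {v : V} (hv : OddVtx G M v) : ¬ EvenVtx G M v := by
  rw [hs.oddVtx_iff] at hv
  rw [hs.evenVtx_iff]
  rintro ⟨u, hu, p, hp, hup⟩
  obtain ⟨u', hu', q, hq, hu'v⟩ := hv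
  exact hM.not_isAlternatingWalk hs hu' hu (q.append p.reverse) (by tauto)
    (hq.append_reverse hs hp (by tauto))

lemma IsMaximumMatching.exists_evenVtx_partner [Finite V] (hM : IsMaximumMatching G M)
    (hs : IsBipartition G s) {v : V} (hv : OddVtx G M v) :
    ∃ w, EvenVtx G M w ∧ s(v, w) ∈ M := by
  rw [hs.oddVtx_iff] at hv
  obtain ⟨u, hu, p, hp, huv⟩ := hv
  obtain ⟨w, hvw⟩ := exists_mem_of_not_unmatchedVtx fun hv =>
    hM.not_isAlternatingWalk hs hu hv p huv hp
  have hadj : G.Adj v w := hM.1.1 hvw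
  have hsides := hs hadj
  refine ⟨w, hs.evenVtx_iff.mpr ⟨u, hu, p.concat hadj, ?_, by tauto⟩, hvw⟩
  exact (hs.isAlternatingWalk_concat_iff p hadj).mpr ⟨hp, by tauto⟩

end Bipartite

section Counting

variable {V : Type*} [Fintype V] {G : SimpleGraph V} {M : Set (Sym2 V)}

open Classical in
lemma IsGraphMatching.sum_sum_toFinset_eq (hM : IsGraphMatching G M) (w : V → ℕ) :
    ∑ e ∈ M.toFinset, ∑ x ∈ e.toFinset, w x =
      ∑ x, if UnmatchedVtx M x then 0 else w x := by
  have hcovered : M.toFinset.biUnion Sym2.toFinset =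
      Finset.univ.filter fun x => ¬ UnmatchedVtx M x := by
    ext x
    simp [UnmatchedVtx]
  rw [← Finset.sum_biUnion, hcovered, Finset.sum_filter]
  · exact Finset.sum_congr rfl fun x _ => by split_ifs <;> rfl
  · intro e he e' he' hne
    simp only [Function.onFun, Finset.disjoint_left, Sym2.mem_toFinset]
    exact fun x hx hx' => hne (hM.2 e (by simpa using he) e' (by simpa using he') x hx hx')

/-- Complementary slackness for the fractional vertex cover `w / 2`. -/
theorem IsGraphMatching.two_mul_ncard_eq_sum_iff (hM : IsGraphMatching G M) {w : V → ℕ}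
    (hw : ∀ a b, G.Adj a b → 2 ≤ w a + w b) :
    2 * M.ncard = ∑ x, w x ↔
      (∀ a b, s(a, b) ∈ M → w a + w b = 2) ∧ ∀ x, 0 < w x → ¬ UnmatchedVtx M x := by
  classical
  have hedge : ∀ a b, s(a, b) ∈ M → ∑ x ∈ s(a, b).toFinset, w x = w a + w b :=
    fun a b h => by rw [Sym2.toFinset_mk_eq, Finset.sum_pair (hM.1 h).ne]
  have hle₁ : ∀ e ∈ M.toFinset, 2 ≤ ∑ x ∈ e.toFinset, w x := by
    intro e he
    induction e using Sym2.ind with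
    | _ a b => rw [Set.mem_toFinset] at he; rw [hedge a b he]; exact hw a b (hM.1 he)
  have hle₂ : ∀ x ∈ Finset.univ, (if UnmatchedVtx M x then 0 else w x) ≤ w x := by
    intro x _; split_ifs <;> omega
  have h₁ := Finset.sum_le_sum hle₁
  have h₂ := Finset.sum_le_sum hle₂
  rw [hM.sum_sum_toFinset_eq] at h₁
  have hcard : 2 * M.ncard = ∑ _e ∈ M.toFinset, 2 := by
    rw [Finset.sum_const, smul_eq_mul, Set.ncard_eq_toFinset_card', Set.toFinset_card,
      mul_comm]
  have hsplit : 2 * M.ncard = ∑ x, w x ↔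
      ∑ _e ∈ M.toFinset, 2 = ∑ e ∈ M.toFinset, ∑ x ∈ e.toFinset, w x ∧
        ∑ x, (if UnmatchedVtx M x then 0 else w x) = ∑ x, w x := by
    rw [hcard, hM.sum_sum_toFinset_eq]
    omega
  rw [hsplit, Finset.sum_eq_sum_iff_of_le hle₁, Finset.sum_eq_sum_iff_of_le hle₂]
  refine and_congr ?_ (forall_congr' fun x => ?_)
  · simp only [Set.mem_toFinset, Sym2.forall]
    exact forall₂_congr fun a b => imp_congr_right fun h => by rw [hedge a b h, eq_comm]
  · by_cases hx : UnmatchedVtx M x <;> simp [hx]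
    omega

end Counting

section GallaiWeight

variable {V : Type*} {G : SimpleGraph V} {M : Set (Sym2 V)} {s : Set V}

open Classical in
/-- Twice the dual solution of the Gallai–Edmonds decomposition: `1` on odd vertices, `1/2` on
unreachable ones and `0` on even ones. -/
noncomputable def gallaiWeight (G : SimpleGraph V) (M : Set (Sym2 V)) (v : V) : ℕ :=
  (if OddVtx G M v then 2 else 0) + (if UnreachableVtx G M v then 1 else 0)

lemma gallaiWeight_of_oddVtx {v : V} (hv : OddVtx G M v) : gallaiWeight G M v = 2 := by
  simp [gallaiWeight, hv, hv.not_unreachableVtx]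

lemma gallaiWeight_of_unreachableVtx {v : V} (hv : UnreachableVtx G M v) :
    gallaiWeight G M v = 1 := by
  have hodd : ¬ OddVtx G M v := fun h => h.not_unreachableVtx hv
  simp [gallaiWeight, hv, hodd]

lemma gallaiWeight_le_one {v : V} (hv : ¬ OddVtx G M v) : gallaiWeight G M v ≤ 1 := by
  unfold gallaiWeight
  split_ifs <;> simp_all

lemma gallaiWeight_eq_zero_iff {v : V} :
    gallaiWeight G M v = 0 ↔ ¬ OddVtx G M v ∧ ¬ UnreachableVtx G M v := by
  unfold gallaiWeight
  split_ifs <;> simp_all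

lemma unreachableVtx_of_gallaiWeight_eq_one {v : V} (hv : gallaiWeight G M v = 1) :
    UnreachableVtx G M v := by
  unfold gallaiWeight at hv
  split_ifs at hv with h <;> simp_all

lemma IsMaximumMatching.gallaiWeight_of_evenVtx [Finite V] (hM : IsMaximumMatching G M)
    (hs : IsBipartition G s) {v : V} (hv : EvenVtx G M v) : gallaiWeight G M v = 0 :=
  gallaiWeight_eq_zero_iff.mpr
    ⟨fun h => hM.not_evenVtx_of_oddVtx hs h hv, hv.not_unreachableVtx⟩

lemma IsGraphMatching.two_le_gallaiWeight_add (hM : IsGraphMatching G M)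
    (hs : IsBipartition G s) {a b : V} (hab : G.Adj a b) :
    2 ≤ gallaiWeight G M a + gallaiWeight G M b := by
  rcases evenVtx_or_oddVtx_or_unreachableVtx G M a with ha | ha | ha
  · rw [gallaiWeight_of_oddVtx (hM.oddVtx_of_adj hs ha hab)]
    omega
  · rw [gallaiWeight_of_oddVtx ha]
    omega
  rcases evenVtx_or_oddVtx_or_unreachableVtx G M b with hb | hb | hb
  · exact ((hM.oddVtx_of_adj hs hb hab.symm).not_unreachableVtx ha).elim
  · rw [gallaiWeight_of_oddVtx hb]
    omega
  · rw [gallaiWeight_of_unreachableVtx ha, gallaiWeight_of_unreachableVtx hb]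

lemma IsMaximumMatching.gallaiWeight_add_eq_two [Finite V] (hM : IsMaximumMatching G M)
    (hs : IsBipartition G s) {a b : V} (hab : s(a, b) ∈ M) :
    gallaiWeight G M a + gallaiWeight G M b = 2 := by
  have hodd : ∀ a b, s(a, b) ∈ M → OddVtx G M a →
      gallaiWeight G M a + gallaiWeight G M b = 2 := fun a b hab ha => by
    obtain ⟨w, hw, haw⟩ := hM.exists_evenVtx_partner hs ha
    obtain rfl := hM.1.eq_of_mem hab haw
    rw [gallaiWeight_of_oddVtx ha, hM.gallaiWeight_of_evenVtx hs hw]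
  by_cases ha : OddVtx G M a
  · exact hodd a b hab ha
  by_cases hb : OddVtx G M b
  · rw [add_comm]
    exact hodd b a (Sym2.eq_swap ▸ hab) hb
  have hadj : G.Adj a b := hM.1.1 hab
  have := hM.1.two_le_gallaiWeight_add hs hadj
  have := gallaiWeight_le_one ha
  have := gallaiWeight_le_one hb
  omega

lemma IsMaximumMatching.not_unmatchedVtx_of_gallaiWeight_pos [Finite V]
    (hM : IsMaximumMatching G M) (hs : IsBipartition G s) {v : V}
    (hv : 0 < gallaiWeight G M v) : ¬ UnmatchedVtx M v := by
  by_cases hodd : OddVtx G M v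
  · obtain ⟨w, -, hvw⟩ := hM.exists_evenVtx_partner hs hodd
    exact fun hun => hun _ hvw (Sym2.mem_mk_left v w)
  · have hun : UnreachableVtx G M v := by
      by_contra h
      exact hv.ne' (gallaiWeight_eq_zero_iff.mpr ⟨hodd, h⟩)
    exact fun h => (evenVtx_of_unmatchedVtx h).not_unreachableVtx hun

lemma sum_gallaiWeight [Fintype V] :
    ∑ v, gallaiWeight G M v =
      2 * {v | OddVtx G M v}.ncard + {v | UnreachableVtx G M v}.ncard := by
  classical
  simp [gallaiWeight, Finset.sum_add_distrib, Finset.sum_ite, Set.ncard_eq_toFinset_card',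
    mul_comm]

end GallaiWeight

/-- Gallai–Edmonds, part (b): let `E`, `O`, `U` be the even, odd and
unreachable vertices of the finite bipartite graph `G₁` (with respect to some maximum
matching `M₀`).  In every maximum matching `M`, every vertex of `U` is matched to
another vertex of `U`, every vertex of `O` is matched to some vertex of `E`, no edge of
`M` joins a vertex of `O` to a vertex of `O ∪ U`, and `|M| = |O| + |U|/2`. -/
theorem gallaiEdmonds_structure
    {V : Type*} [Fintype V] (G₁ : SimpleGraph V) (hbip : IsBipartite G₁)
    (M₀ : Set (Sym2 V)) (h₀ : IsMaximumMatching G₁ M₀) :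
    ∀ M : Set (Sym2 V), IsMaximumMatching G₁ M →
      (∀ v, UnreachableVtx G₁ M₀ v → ∃ w, UnreachableVtx G₁ M₀ w ∧ s(v, w) ∈ M) ∧
      (∀ v, OddVtx G₁ M₀ v → ∃ w, EvenVtx G₁ M₀ w ∧ s(v, w) ∈ M) ∧
      (∀ v w, s(v, w) ∈ M → OddVtx G₁ M₀ v →
        ¬ (OddVtx G₁ M₀ w ∨ UnreachableVtx G₁ M₀ w)) ∧
      M.ncard = {v | OddVtx G₁ M₀ v}.ncard + {v | UnreachableVtx G₁ M₀ v}.ncard / 2 := by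
  intro M hM
  obtain ⟨s, hs⟩ := hbip
  have hcover : ∀ a b, G₁.Adj a b → 2 ≤ gallaiWeight G₁ M₀ a + gallaiWeight G₁ M₀ b :=
    fun _ _ => h₀.1.two_le_gallaiWeight_add hs
  have hM₀ := (h₀.1.two_mul_ncard_eq_sum_iff hcover).mpr
    ⟨fun _ _ => h₀.gallaiWeight_add_eq_two hs,
      fun _ => h₀.not_unmatchedVtx_of_gallaiWeight_pos hs⟩
  have hcard : M.ncard = M₀.ncard := le_antisymm (h₀.2 M hM.1) (hM.2 M₀ h₀.1)
  obtain ⟨htight, hcovered⟩ := (hM.1.two_mul_ncard_eq_sum_iff hcover).mp (hcard ▸ hM₀)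
  have hpartner : ∀ v, 0 < gallaiWeight G₁ M₀ v →
      ∃ w, s(v, w) ∈ M ∧ gallaiWeight G₁ M₀ v + gallaiWeight G₁ M₀ w = 2 := fun v hv => by
    obtain ⟨w, hvw⟩ := exists_mem_of_not_unmatchedVtx (hcovered v hv)
    exact ⟨w, hvw, htight v w hvw⟩
  refine ⟨fun v hv => ?_, fun v hv => ?_, fun v w hvw hv => ?_, ?_⟩
  · obtain ⟨w, hvw, hsum⟩ := hpartner v (by simp [gallaiWeight_of_unreachableVtx hv])
    rw [gallaiWeight_of_unreachableVtx hv] at hsum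
    exact ⟨w, unreachableVtx_of_gallaiWeight_eq_one (by omega), hvw⟩
  · obtain ⟨w, hvw, hsum⟩ := hpartner v (by simp [gallaiWeight_of_oddVtx hv])
    rw [gallaiWeight_of_oddVtx hv] at hsum
    have hw := gallaiWeight_eq_zero_iff.mp (show gallaiWeight G₁ M₀ w = 0 by omega)
    exact ⟨w, (evenVtx_or_oddVtx_or_unreachableVtx G₁ M₀ w).resolve_right (not_or.mpr hw), hvw⟩
  · have hsum := htight v w hvw
    rw [gallaiWeight_of_oddVtx hv] at hsum
    exact not_or.mpr (gallaiWeight_eq_zero_iff.mp (by omega))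
  · rw [sum_gallaiWeight] at hM₀
    omega
end

section
/- Let I be a CHA instance with agents A, houses H and capacity function c, and for each agent a let s(a) be the highest-ranked house h on a's preference list such that either h is not an f-house, or h is an f-house with h ≠ f(a) and |f(h)| < c(h). Then a matching M of I is popular if and only if (1) for every f-house h: if |f(h)| ≤ c(h) then every agent of f(h) is matched to h in M, and otherwise h is matched in M to exactly c(h) agents all belonging to f(h); and (2) M matches every agent, and M(a) ∈ {f(a), s(a)} for every agent a. -/
/-- A Capacitated House Allocation (CHA) instance: agents `A`, houses `H`, a capacity
function `cap : H → ℤ_{>0}`, and for each agent a strict preference order (lower rank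
means more preferred) over its adjacent houses, augmented with a unique last-resort
house `l(a)` of capacity `1` and lowest preference, appearing only on `a`'s list. -/
structure CHAInstance (A H : Type*) where
  adj : A → H → Prop
  rank : A → H → ℕ
  rank_strict : ∀ a h h', adj a h → adj a h' → rank a h = rank a h' → h = h'
  cap : H → ℕ
  cap_pos : ∀ h, 0 < cap h
  lastResort : A → H
  lastResort_injective : Function.Injective lastResort
  lastResort_adj : ∀ a, adj a (lastResort a)
  lastResort_worst : ∀ a h, adj a h → h ≠ lastResort a → rank a h < rank a (lastResort a)
  lastResort_only : ∀ a a', adj a' (lastResort a) → a' = a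
  lastResort_cap : ∀ a, cap (lastResort a) = 1

namespace CHAInstance

variable {A H : Type*}

/-- A matching of the CHA instance `I`: each agent is matched to at most one adjacent
house, and each house `h` is matched to at most `cap h` agents. -/
def IsMatching (I : CHAInstance A H) (M : Set (A × H)) : Prop :=
  (∀ p ∈ M, I.adj p.1 p.2) ∧ (∀ p ∈ M, ∀ q ∈ M, p.1 = q.1 → p = q) ∧
    (∀ h : H, {a | (a, h) ∈ M}.ncard ≤ I.cap h)

/-- Agent `a` prefers matching `M` to matching `M'`: `a` is matched in `M` and either
unmatched in `M'`, or strictly prefers its house in `M` to its house in `M'`. -/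
def Prefers (I : CHAInstance A H) (M M' : Set (A × H)) (a : A) : Prop :=
  ∃ h, (a, h) ∈ M ∧ ∀ h', (a, h') ∈ M' → I.rank a h < I.rank a h'

/-- `M` is more popular than `M'`. -/
def MorePopular [Fintype A] (I : CHAInstance A H) (M M' : Set (A × H)) : Prop :=
  Nat.card {a | Prefers I M M' a} > Nat.card {a | Prefers I M' M a}

/-- `M` is a popular matching of `I`. -/
def IsPopular [Fintype A] (I : CHAInstance A H) (M : Set (A × H)) : Prop :=
  I.IsMatching M ∧ ∀ M', I.IsMatching M' → ¬ MorePopular I M' M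

/-- `h = f(a)`: house `h` is the (unique) first choice of agent `a`. -/
def IsFirstChoice (I : CHAInstance A H) (a : A) (h : H) : Prop :=
  I.adj a h ∧ ∀ h', I.adj a h' → I.rank a h ≤ I.rank a h'

/-- `f(h)`: the set of agents whose first choice is `h`. -/
def fSet (I : CHAInstance A H) (h : H) : Set A := {a | IsFirstChoice I a h}

/-- `h` is an `f`-house if it is the first choice of some agent. -/
def IsFHouse (I : CHAInstance A H) (h : H) : Prop := ∃ a, IsFirstChoice I a h

/-- The defining condition for `s(a)`: `h` is not an `f`-house, or `h` is an `f`-house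
with `h ≠ f(a)` and `|f(h)| < c(h)`. -/
def SCond (I : CHAInstance A H) (a : A) (h : H) : Prop :=
  ¬ IsFHouse I h ∨ (¬ IsFirstChoice I a h ∧ (fSet I h).ncard < I.cap h)

/-- `h = s(a)`: house `h` is the highest-ranked house on `a`'s preference list
satisfying `SCond`. -/
def IsSecondChoice (I : CHAInstance A H) (a : A) (h : H) : Prop :=
  I.adj a h ∧ SCond I a h ∧ ∀ h', I.adj a h' → SCond I a h' → I.rank a h ≤ I.rank a h'

/-- The switching graph `G_M` of `I` with respect to a popular matching `M`:
`SwEdge I M a src tgt w` says that agent `a` contributes the directed edge from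
`src = M(a)` to `tgt`, the other element of `{f(a), s(a)}`, with weight
`w = -1` if `M(a) = f(a)` and `w = +1` otherwise. -/
def SwEdge (I : CHAInstance A H) (M : Set (A × H)) (a : A) (src tgt : H) (w : ℤ) :
    Prop :=
  (a, src) ∈ M ∧
    ((IsFirstChoice I a src ∧ IsSecondChoice I a tgt ∧ w = -1) ∨
     (IsSecondChoice I a src ∧ IsFirstChoice I a tgt ∧ w = 1))

/-- The unsaturation degree `u_M(h) = c(h) - |M(h)|` of a house `h`. -/
noncomputable def unsatDeg (I : CHAInstance A H) (M : Set (A × H)) (h : H) : ℕ :=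
  I.cap h - {a | (a, h) ∈ M}.ncard

/-- A house is saturated if its unsaturation degree is `0`. -/
def Saturated (I : CHAInstance A H) (M : Set (A × H)) (h : H) : Prop :=
  unsatDeg I M h = 0

end CHAInstance

/-!
If some agent `a` prefers a house `t` to `M(a)`, popularity forces `t` to be filled to capacity
with agents whose first choice it is. Otherwise `a` either moves into a vacancy at `t`, or
displaces an occupant `b` with `f(b) ≠ t`; `b` then moves up to `f(b)`, where room is made by
sending one occupant to its last resort, so two agents gain and at most one loses. Both
conditions follow from this by counting `f(h)` against `c(h)`.

Conversely, under the two conditions an agent who gains by switching to `M'` lands, in `M'`, on a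
house `w` that `M` fills with first-choice agents. At each such `w` the gainers are at most as
many as the `M`-occupants of `w` that leave it, and each of those loses. Summing over houses,
no matching is more popular than `M`.
-/

namespace CHAInstance

variable {A H : Type*} {I : CHAInstance A H} {M M' : Set (A × H)} {a b c x : A} {h h₀ t u w : H}

def occupants (M : Set (A × H)) (h : H) : Set A := {a | (a, h) ∈ M}

@[simp] theorem mem_occupants : a ∈ occupants M h ↔ (a, h) ∈ M := Iff.rfl

def SaturatedByFSet (I : CHAInstance A H) (M : Set (A × H)) (h : H) : Prop :=
  occupants M h ⊆ I.fSet h ∧ (occupants M h).ncard = I.cap h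

theorem IsMatching.adj (hM : I.IsMatching M) (ha : (a, h) ∈ M) : I.adj a h := hM.1 _ ha

theorem IsMatching.eq_of_mem (hM : I.IsMatching M) (ha : (a, h) ∈ M) (ha' : (a, t) ∈ M) :
    h = t :=
  congrArg Prod.snd (hM.2.1 _ ha _ ha' rfl)

theorem IsMatching.ncard_occupants_le (hM : I.IsMatching M) (h : H) :
    (occupants M h).ncard ≤ I.cap h :=
  hM.2.2 h

theorem IsMatching.occupants_lastResort_sdiff (hM : I.IsMatching M) (a : A) :
    occupants M (I.lastResort a) \ {a} = ∅ :=
  Set.eq_empty_of_forall_notMem fun x ⟨hx, hxa⟩ => hxa (I.lastResort_only a x (hM.adj hx))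

theorem IsFirstChoice.rank_lt (hf : I.IsFirstChoice a h) (hadj : I.adj a t) (hne : t ≠ h) :
    I.rank a h < I.rank a t :=
  (hf.2 t hadj).lt_of_ne fun e => hne (I.rank_strict a t h hadj hf.1 e.symm)

theorem exists_rank_min [Finite H] (I : CHAInstance A H) (a : A) {P : H → Prop}
    (hP : ∃ h, I.adj a h ∧ P h) :
    ∃ h, I.adj a h ∧ P h ∧ ∀ h', I.adj a h' → P h' → I.rank a h ≤ I.rank a h' := by
  obtain ⟨h, ⟨hadj, hPh⟩, hmin⟩ :=
    Set.exists_min_image {h | I.adj a h ∧ P h} (I.rank a) (Set.toFinite _) hP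
  exact ⟨h, hadj, hPh, fun h' hadj' hP' => hmin h' ⟨hadj', hP'⟩⟩

theorem exists_isFirstChoice [Finite H] (I : CHAInstance A H) (a : A) :
    ∃ h, I.IsFirstChoice a h := by
  obtain ⟨h, hadj, -, hmin⟩ :=
    I.exists_rank_min a (P := fun _ => True) ⟨_, I.lastResort_adj a, trivial⟩
  exact ⟨h, hadj, fun h' hadj' => hmin h' hadj' trivial⟩

theorem not_isFHouse_lastResort (hadj : I.adj a h) (hne : h ≠ I.lastResort a) :
    ¬ I.IsFHouse (I.lastResort a) := by
  rintro ⟨x, hxf⟩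
  obtain rfl := I.lastResort_only a x hxf.1
  exact (hxf.2 h hadj).not_gt (I.lastResort_worst x h hadj hne)

theorem exists_isSecondChoice [Finite H] (hadj : I.adj a h) (hne : h ≠ I.lastResort a) :
    ∃ h, I.IsSecondChoice a h :=
  I.exists_rank_min a ⟨_, I.lastResort_adj a, Or.inl (not_isFHouse_lastResort hadj hne)⟩

theorem not_sCond_iff :
    ¬ I.SCond a h ↔ I.IsFHouse h ∧ (I.IsFirstChoice a h ∨ I.cap h ≤ (I.fSet h).ncard) := by
  simp only [SCond, not_or, not_and_or, not_not, not_lt]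

theorem SCond.ncard_fSet_lt (hs : I.SCond a h) : (I.fSet h).ncard < I.cap h := by
  rcases hs with hnf | ⟨-, hlt⟩
  · have : I.fSet h = ∅ := Set.eq_empty_of_forall_notMem fun x hx => hnf ⟨x, hx⟩
    simpa [this] using I.cap_pos h
  · exact hlt

theorem IsSecondChoice.not_sCond (hs : I.IsSecondChoice a h) (hadj : I.adj a t)
    (hr : I.rank a t < I.rank a h) : ¬ I.SCond a t :=
  fun ht => (hs.2.2 t hadj ht).not_gt hr

def reassign (M : Set (A × H)) (a : A) (t : H) : Set (A × H) :=
  insert (a, t) {p ∈ M | p.1 ≠ a}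

@[simp] theorem mem_reassign :
    (x, h) ∈ reassign M a t ↔ x = a ∧ h = t ∨ (x, h) ∈ M ∧ x ≠ a := by
  simp [reassign]

theorem isMatching_reassign [Finite A] (hM : I.IsMatching M) (hadj : I.adj a t)
    (hroom : (occupants M t \ {a}).ncard < I.cap t) : I.IsMatching (reassign M a t) := by
  refine ⟨?_, ?_, fun h => ?_⟩
  · rintro ⟨x, h⟩ hp
    rcases mem_reassign.1 hp with ⟨rfl, rfl⟩ | ⟨hp, -⟩
    exacts [hadj, hM.adj hp]
  · rintro ⟨x, h⟩ hp ⟨y, h'⟩ hq (rfl : x = y)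
    rcases mem_reassign.1 hp with ⟨rfl, rfl⟩ | ⟨hp, hxa⟩ <;>
      rcases mem_reassign.1 hq with ⟨hya, rfl⟩ | ⟨hq, hya⟩
    · rfl
    · exact absurd rfl hya
    · exact absurd hya hxa
    · rw [hM.eq_of_mem hp hq]
  · by_cases hht : h = t
    · subst hht
      have hsub : occupants (reassign M a h) h ⊆ insert a (occupants M h \ {a}) := by
        intro x hx
        rcases mem_reassign.1 hx with ⟨rfl, -⟩ | ⟨hx, hxa⟩
        exacts [Set.mem_insert _ _, Set.mem_insert_of_mem _ ⟨hx, hxa⟩]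
      exact (Set.ncard_le_ncard hsub).trans ((Set.ncard_insert_le _ _).trans hroom)
    · have hsub : occupants (reassign M a t) h ⊆ occupants M h := by
        intro x hx
        rcases mem_reassign.1 hx with ⟨-, rfl⟩ | ⟨hx, -⟩
        exacts [absurd rfl hht, hx]
      exact (Set.ncard_le_ncard hsub).trans (hM.ncard_occupants_le h)

theorem Prefers.exists_mem (hp : I.Prefers M M' x) : ∃ h, (x, h) ∈ M :=
  let ⟨h, hh, _⟩ := hp
  ⟨h, hh⟩

theorem Prefers.not_prefers (hp : I.Prefers M M' x) : ¬ I.Prefers M' M x := by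
  rintro ⟨h', hh', hlt'⟩
  obtain ⟨h, hh, hlt⟩ := hp
  exact (hlt h' hh').not_gt (hlt' h hh)

theorem Prefers.notMem_of_mem (hM : I.IsMatching M) (hp : I.Prefers M M' x)
    (hx : (x, w) ∈ M) : (x, w) ∉ M' := by
  obtain ⟨h, hh, hlt⟩ := hp
  obtain rfl := hM.eq_of_mem hh hx
  exact fun hx' => (hlt h hx').false

theorem prefers_of_mem (hM' : I.IsMatching M') (ht : (a, t) ∈ M) (hh : (a, h) ∈ M')
    (hr : I.rank a t < I.rank a h) : I.Prefers M M' a :=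
  ⟨t, ht, fun _ hh' => hM'.eq_of_mem hh hh' ▸ hr⟩

theorem IsFirstChoice.prefers (hM' : I.IsMatching M') (hf : I.IsFirstChoice x w)
    (hx : (x, w) ∈ M) (hx' : (x, w) ∉ M') : I.Prefers M M' x :=
  ⟨w, hx, fun _ hh' => hf.rank_lt (hM'.adj hh') fun e => hx' (e ▸ hh')⟩

theorem morePopular_of_eqOn_compl [Fintype A] {T W : Set A}
    (hagree : ∀ x ∉ T, ∀ h, (x, h) ∈ M' ↔ (x, h) ∈ M)
    (hW : W ⊆ {x | I.Prefers M' M x}) (hlt : (T \ W).ncard < W.ncard) :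
    I.MorePopular M' M := by
  have hsub : {x | I.Prefers M M' x} ⊆ T \ W := by
    refine fun x hx => ⟨by_contra fun hxT => ?_, fun hxW => hx.not_prefers (hW hxW)⟩
    obtain ⟨h, hh, hr⟩ := hx
    exact (hr h ((hagree x hxT h).2 hh)).false
  rw [MorePopular, Nat.card_coe_set_eq, Nat.card_coe_set_eq]
  exact ((Set.ncard_le_ncard hsub).trans_lt hlt).trans_le (Set.ncard_le_ncard hW)

theorem isMatching_displacement [Finite A] (hM : I.IsMatching M) (hat : I.adj a t)
    (hb : (b, t) ∈ M) (hbu : I.adj b u) (hut : u ≠ t)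
    (hroom : (occupants M u \ {c}).ncard < I.cap u) :
    I.IsMatching (reassign (reassign (reassign M c (I.lastResort c)) b u) a t) := by
  have hM₁ : I.IsMatching (reassign M c (I.lastResort c)) :=
    isMatching_reassign hM (I.lastResort_adj c)
      (by simp [hM.occupants_lastResort_sdiff, I.cap_pos])
  have hM₂ : I.IsMatching (reassign (reassign M c (I.lastResort c)) b u) := by
    refine isMatching_reassign hM₁ hbu ((Set.ncard_le_ncard ?_).trans_lt hroom)
    rintro y ⟨hy, hyb⟩
    rcases mem_reassign.1 hy with ⟨rfl, rfl⟩ | ⟨hy, hyc⟩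
    exacts [absurd (I.lastResort_only y b hbu).symm hyb, ⟨hy, hyc⟩]
  refine isMatching_reassign hM₂ hat
    ((Set.ncard_le_ncard (t := occupants M t \ {b}) ?_).trans_lt ?_)
  · rintro y ⟨hy, hya⟩
    simp only [mem_occupants, mem_reassign] at hy
    rcases hy with ⟨-, rfl⟩ | ⟨⟨rfl, rfl⟩ | ⟨hy, -⟩, hyb⟩
    · exact absurd rfl hut
    · exact absurd (I.lastResort_only y a hat).symm hya
    · exact ⟨hy, hyb⟩
  · have := Set.ncard_sdiff_singleton_add_one (show b ∈ occupants M t from hb)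
    have := hM.ncard_occupants_le t
    omega

def FirstChoiceCondition (I : CHAInstance A H) (M : Set (A × H)) (h : H) : Prop :=
  ((I.fSet h).ncard ≤ I.cap h → ∀ a ∈ I.fSet h, (a, h) ∈ M) ∧
    (I.cap h < (I.fSet h).ncard → (occupants M h).ncard = I.cap h ∧ occupants M h ⊆ I.fSet h)

def MatchedToFirstOrSecond (I : CHAInstance A H) (M : Set (A × H)) (a : A) : Prop :=
  ∃ h, (a, h) ∈ M ∧ (I.IsFirstChoice a h ∨ I.IsSecondChoice a h)

section Necessity

variable [Fintype A]

theorem not_isPopular_of_prefers_vacancy (hM : I.IsMatching M) (hadj : I.adj a t)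
    (hroom : (occupants M t \ {a}).ncard < I.cap t)
    (hbetter : ∀ h, (a, h) ∈ M → I.rank a t < I.rank a h) : ¬ I.IsPopular M := by
  refine fun hpop => hpop.2 _ (isMatching_reassign hM hadj hroom) ?_
  refine morePopular_of_eqOn_compl (T := {a}) (W := {a}) (fun x hx h => ?_) ?_ (by simp)
  · simp [Set.mem_singleton_iff.not.1 hx]
  · simpa using ⟨t, by simp, hbetter⟩

theorem not_isPopular_of_displacement (hM : I.IsMatching M) (ha : (a, h₀) ∈ M)
    (hat : I.adj a t) (hrt : I.rank a t < I.rank a h₀) (hb : (b, t) ∈ M)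
    (hbu : I.adj b u) (hru : I.rank b u < I.rank b t)
    (hroom : (occupants M u \ {c}).ncard < I.cap u) : ¬ I.IsPopular M := by
  intro hpop
  have hut : u ≠ t := by rintro rfl; exact hru.false
  have hab : a ≠ b := by rintro rfl; exact (hM.eq_of_mem ha hb ▸ hrt).false
  refine hpop.2 _ (isMatching_displacement hM hat hb hbu hut hroom)
    (morePopular_of_eqOn_compl (T := {a, b, c}) (W := {a, b}) (fun x hx h => ?_) ?_ ?_)
  · simp only [Set.mem_insert_iff, Set.mem_singleton_iff, not_or] at hx
    simp [hx.1, hx.2.1, hx.2.2]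
  · rintro x (rfl | rfl)
    · exact prefers_of_mem hM (by simp) ha hrt
    · exact prefers_of_mem hM (by simp [Ne.symm hab]) hb hru
  · have hsub : ({a, b, c} : Set A) \ {a, b} ⊆ {c} := by
      intro y; simp +contextual
    rw [Set.ncard_pair hab]
    exact (Set.ncard_le_ncard hsub).trans_lt (by simp)

theorem IsPopular.exists_mem (hpop : I.IsPopular M) (a : A) : ∃ h, (a, h) ∈ M := by
  by_contra! hnone
  exact not_isPopular_of_prefers_vacancy hpop.1 (I.lastResort_adj a)
    (by simp [hpop.1.occupants_lastResort_sdiff, I.cap_pos]) (fun h hh => absurd hh (hnone h))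
    hpop

variable [Finite H]

theorem not_isPopular_of_prefers_of_not_isFirstChoice (hM : I.IsMatching M)
    (ha : (a, h₀) ∈ M) (hat : I.adj a t) (hrt : I.rank a t < I.rank a h₀)
    (hb : (b, t) ∈ M) (hnf : ¬ I.IsFirstChoice b t) : ¬ I.IsPopular M := by
  obtain ⟨u, hu⟩ := I.exists_isFirstChoice b
  have hru : I.rank b u < I.rank b t := hu.rank_lt (hM.adj hb) fun e => hnf (e ▸ hu)
  obtain ⟨c, hc⟩ : ∃ c, (occupants M u \ {c}).ncard < I.cap u := by
    rcases (occupants M u).eq_empty_or_nonempty with hemp | ⟨c, hc⟩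
    -- `u` is empty, so it does not matter which agent is sent to its last resort
    · exact ⟨b, by simp [hemp, I.cap_pos]⟩
    · exact ⟨c, (Set.ncard_sdiff_singleton_lt_of_mem hc).trans_le (hM.ncard_occupants_le u)⟩
  exact not_isPopular_of_displacement hM ha hat hrt hb hu.1 hru hc

theorem IsPopular.saturatedByFSet_of_prefers (hpop : I.IsPopular M) (ha : (a, h₀) ∈ M)
    (hat : I.adj a t) (hrt : I.rank a t < I.rank a h₀) :
    I.SaturatedByFSet M t := by
  refine ⟨fun b hb => by_contra fun hnf =>
    not_isPopular_of_prefers_of_not_isFirstChoice hpop.1 ha hat hrt hb hnf hpop, ?_⟩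
  refine (hpop.1.ncard_occupants_le t).antisymm (not_lt.1 fun hlt => ?_)
  exact not_isPopular_of_prefers_vacancy hpop.1 hat
    ((Set.ncard_le_ncard Set.sdiff_subset).trans_lt hlt)
    (fun h hh => hpop.1.eq_of_mem ha hh ▸ hrt) hpop

theorem IsPopular.saturatedByFSet_of_mem_fSet (hpop : I.IsPopular M) (haf : a ∈ I.fSet h)
    (ha : (a, h) ∉ M) : I.SaturatedByFSet M h := by
  obtain ⟨h₀, ha₀⟩ := hpop.exists_mem a
  refine hpop.saturatedByFSet_of_prefers ha₀ haf.1 (haf.rank_lt (hpop.1.adj ha₀) ?_)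
  rintro rfl
  exact ha ha₀

theorem IsPopular.mem_of_mem_fSet (hpop : I.IsPopular M) (hle : (I.fSet h).ncard ≤ I.cap h)
    (haf : a ∈ I.fSet h) : (a, h) ∈ M := by
  by_contra ha
  obtain ⟨hsub, hcard⟩ := hpop.saturatedByFSet_of_mem_fSet haf ha
  have hsub' : occupants M h ⊆ I.fSet h \ {a} := fun x hx =>
    ⟨hsub hx, by rintro rfl; exact ha hx⟩
  have := Set.ncard_le_ncard hsub'
  have := Set.ncard_sdiff_singleton_add_one haf
  omega

theorem IsPopular.occupants_subset_fSet (hpop : I.IsPopular M)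
    (hcap : I.cap h ≤ (I.fSet h).ncard) : occupants M h ⊆ I.fSet h := by
  by_cases hsub : I.fSet h ⊆ occupants M h
  · exact (Set.eq_of_subset_of_ncard_le hsub
      ((hpop.1.ncard_occupants_le h).trans hcap)).symm.subset
  · obtain ⟨a, haf, ha⟩ := Set.not_subset.1 hsub
    exact (hpop.saturatedByFSet_of_mem_fSet haf ha).1

theorem IsPopular.ncard_occupants_eq_cap (hpop : I.IsPopular M)
    (hcap : I.cap h < (I.fSet h).ncard) : (occupants M h).ncard = I.cap h := by
  obtain ⟨a, haf, ha⟩ := Set.exists_mem_notMem_of_ncard_lt_ncard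
    ((hpop.1.ncard_occupants_le h).trans_lt hcap)
  exact (hpop.saturatedByFSet_of_mem_fSet haf ha).2

theorem IsPopular.isFirstChoice_or_isSecondChoice (hpop : I.IsPopular M) (ha : (a, h₀) ∈ M) :
    I.IsFirstChoice a h₀ ∨ I.IsSecondChoice a h₀ := by
  by_contra! ⟨hnf, hns⟩
  have hadj := hpop.1.adj ha
  obtain ⟨s, hs⟩ : ∃ s, I.IsSecondChoice a s := by
    by_cases hl : h₀ = I.lastResort a
    · obtain ⟨f, hf⟩ := I.exists_isFirstChoice a
      exact exists_isSecondChoice hf.1 fun e => hnf (hl ▸ e ▸ hf)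
    · exact exists_isSecondChoice hadj hl
  rcases lt_trichotomy (I.rank a h₀) (I.rank a s) with hlt | heq | hgt
  · obtain ⟨-, hcap⟩ := not_sCond_iff.1 (hs.not_sCond hadj hlt)
    exact hnf (hpop.occupants_subset_fSet (hcap.resolve_left hnf) ha)
  · exact hns (I.rank_strict a h₀ s hadj hs.1 heq ▸ hs)
  · obtain ⟨hsub, hcard⟩ := hpop.saturatedByFSet_of_prefers ha hs.1 hgt
    exact (Set.ncard_le_ncard hsub).not_gt (hcard ▸ hs.2.1.ncard_fSet_lt)

theorem IsPopular.firstChoiceCondition (hpop : I.IsPopular M) (h : H) :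
    I.FirstChoiceCondition M h :=
  ⟨fun hle _ => hpop.mem_of_mem_fSet hle,
    fun hlt => ⟨hpop.ncard_occupants_eq_cap hlt, hpop.occupants_subset_fSet hlt.le⟩⟩

theorem IsPopular.matchedToFirstOrSecond (hpop : I.IsPopular M) (a : A) :
    I.MatchedToFirstOrSecond M a :=
  let ⟨h, hh⟩ := hpop.exists_mem a
  ⟨h, hh, hpop.isFirstChoice_or_isSecondChoice hh⟩

end Necessity

section Sufficiency

variable [Finite A]

theorem FirstChoiceCondition.saturatedByFSet (hM : I.IsMatching M)
    (hw : I.FirstChoiceCondition M w) (hcap : I.cap w ≤ (I.fSet w).ncard) :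
    I.SaturatedByFSet M w := by
  rcases hcap.eq_or_lt with heq | hlt
  · have hfill := Set.eq_of_subset_of_ncard_le (hw.1 heq.ge)
      ((hM.ncard_occupants_le w).trans heq.le)
    exact ⟨hfill.symm.subset, (congrArg Set.ncard hfill).symm.trans heq.symm⟩
  · exact (hw.2 hlt).symm

theorem saturatedByFSet_of_prefers (hM : I.IsMatching M)
    (hc₁ : ∀ h, I.IsFHouse h → I.FirstChoiceCondition M h) (hx : (x, h) ∈ M)
    (hfs : I.IsFirstChoice x h ∨ I.IsSecondChoice x h) (hadj : I.adj x w)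
    (hr : I.rank x w < I.rank x h) :
    I.SaturatedByFSet M w := by
  have hs : I.IsSecondChoice x h := hfs.resolve_left fun hf => (hf.2 w hadj).not_gt hr
  obtain ⟨hF, hcap⟩ := not_sCond_iff.1 (hs.not_sCond hadj hr)
  refine (hc₁ w hF).saturatedByFSet hM (hcap.elim (fun hf => not_lt.1 fun hlt => ?_) id)
  exact (hM.eq_of_mem ((hc₁ w hF).1 hlt.le x hf) hx ▸ hr).false

theorem ncard_eq_sum_ncard_inter_occupants [Fintype H] (hM : I.IsMatching M) (X : Set A)
    (hX : ∀ x ∈ X, ∃ h, (x, h) ∈ M) : X.ncard = ∑ h, (X ∩ occupants M h).ncard := by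
  have hcover : X = ⋃ h, X ∩ occupants M h := by
    ext x
    simp only [Set.mem_iUnion, Set.mem_inter_iff, mem_occupants]
    exact ⟨fun hx => (hX x hx).imp fun _ hh => ⟨hx, hh⟩, fun ⟨_, hx, _⟩ => hx⟩
  conv_lhs => rw [hcover]
  rw [Set.ncard_iUnion_of_finite (fun _ => Set.toFinite _)
    fun h h' hne => Set.disjoint_left.2 fun x hx hx' => hne (hM.eq_of_mem hx.2 hx'.2),
    finsum_eq_sum_of_fintype]

theorem ncard_prefers_inter_occupants_le (hM : I.IsMatching M) (hM' : I.IsMatching M')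
    (hc₁ : ∀ h, I.IsFHouse h → I.FirstChoiceCondition M h)
    (hc₂ : ∀ a, I.MatchedToFirstOrSecond M a) (w : H) :
    ({x | I.Prefers M' M x} ∩ occupants M' w).ncard ≤
      ({x | I.Prefers M M' x} ∩ occupants M w).ncard := by
  rcases ({x | I.Prefers M' M x} ∩ occupants M' w).eq_empty_or_nonempty with
    hemp | ⟨x, hxp, hxw⟩
  · simp [hemp]
  obtain ⟨h, hx, hfs⟩ := hc₂ x
  obtain ⟨w', hw', hr⟩ := hxp
  obtain rfl := hM'.eq_of_mem hw' hxw
  obtain ⟨hsub, hcard⟩ := saturatedByFSet_of_prefers hM hc₁ hx hfs (hM'.adj hxw) (hr h hx)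
  have hgain : {x | I.Prefers M' M x} ∩ occupants M' w' ⊆ occupants M' w' \ occupants M w' :=
    fun y ⟨hy, hyw⟩ => ⟨hyw, hy.notMem_of_mem hM' hyw⟩
  have hloss : occupants M w' \ occupants M' w' ⊆ {x | I.Prefers M M' x} ∩ occupants M w' :=
    fun y ⟨hyw, hyw'⟩ => ⟨(hsub hyw).prefers hM' hyw hyw', hyw⟩
  have hswap := (Set.ncard_le_ncard_iff_ncard_sdiff_le_ncard_sdiff (s := occupants M' w')
    (t := occupants M w')).1 (hcard ▸ hM'.ncard_occupants_le w')
  exact ((Set.ncard_le_ncard hgain).trans hswap).trans (Set.ncard_le_ncard hloss)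

end Sufficiency

theorem isPopular_of_conditions [Fintype A] [Fintype H] (hM : I.IsMatching M)
    (hc₁ : ∀ h, I.IsFHouse h → I.FirstChoiceCondition M h)
    (hc₂ : ∀ a, I.MatchedToFirstOrSecond M a) : I.IsPopular M := by
  refine ⟨hM, fun M' hM' hmore => hmore.not_ge ?_⟩
  rw [Nat.card_coe_set_eq, Nat.card_coe_set_eq,
    ncard_eq_sum_ncard_inter_occupants hM' {x | I.Prefers M' M x} fun _ => Prefers.exists_mem,
    ncard_eq_sum_ncard_inter_occupants hM {x | I.Prefers M M' x} fun _ => Prefers.exists_mem]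
  exact Finset.sum_le_sum fun w _ => ncard_prefers_inter_occupants_le hM hM' hc₁ hc₂ w

end CHAInstance

open CHAInstance in
/-- a matching `M` of a CHA instance `I` is popular if and only if
(1) for every `f`-house `h`: if `|f(h)| ≤ c(h)` then every agent of `f(h)` is matched
to `h`, and otherwise `h` is matched to exactly `c(h)` agents, all from `f(h)`; and
(2) `M` matches every agent, and `M(a) ∈ {f(a), s(a)}` for every agent `a`. -/
theorem popular_iff_CHA_characterization
    {A H : Type*} [Fintype A] [Fintype H] (I : CHAInstance A H)
    (M : Set (A × H)) (hM : IsMatching I M) :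
    IsPopular I M ↔
      ((∀ h : H, IsFHouse I h →
          (((fSet I h).ncard ≤ I.cap h → ∀ a ∈ fSet I h, (a, h) ∈ M) ∧
           (I.cap h < (fSet I h).ncard →
             {a | (a, h) ∈ M}.ncard = I.cap h ∧ ∀ a, (a, h) ∈ M → a ∈ fSet I h))) ∧
       (∀ a : A, ∃ h : H, (a, h) ∈ M ∧
          (IsFirstChoice I a h ∨ IsSecondChoice I a h))) := by
  constructor
  · intro hpop
    exact ⟨fun h _ => hpop.firstChoiceCondition h, hpop.matchedToFirstOrSecond⟩
  · rintro ⟨hc₁, hc₂⟩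
    exact isPopular_of_conditions hM hc₁ hc₂
end
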